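/- Let 𝒜 be a nonempty finite set with n = |𝒜| elements, A : 𝒜 → ℝ a function, and β ≥ 0. Then Σ_a exp(β·A(a))·A(a) / Σ_a exp(β·A(a)) ≥ (1/n)·Σ_a A(a), with strict inequality whenever β > 0 and A is not constant on 𝒜. -/
import Mathlib

open Finset

private lemma expand_pairs {𝒜 : Type*} [Fintype 𝒜] (f g : 𝒜 → ℝ) :
    ∑ a : 𝒜, ∑ b : 𝒜, (f a - f b) * (g a - g b) =
      2 * ((Fintype.card 𝒜 : ℝ) * ∑ a : 𝒜, f a * g a - (∑ a : 𝒜, f a) * (∑ a : 𝒜, g a)) := by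
  simp only [sub_mul, mul_sub, Finset.sum_sub_distrib, Finset.sum_const, Finset.card_univ,
    nsmul_eq_mul, ← Finset.sum_mul, ← Finset.mul_sum]
  ring

private lemma term_nonneg (β x y : ℝ) (hβ : 0 ≤ β) :
    0 ≤ (Real.exp (β * x) - Real.exp (β * y)) * (x - y) := by
  rcases le_total x y with h | h
  · have := Real.exp_le_exp.2 (mul_le_mul_of_nonneg_left h hβ)
    nlinarith
  · have := Real.exp_le_exp.2 (mul_le_mul_of_nonneg_left h hβ)
    nlinarith

private lemma term_pos (β x y : ℝ) (hβ : 0 < β) (hxy : x ≠ y) :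
    0 < (Real.exp (β * x) - Real.exp (β * y)) * (x - y) := by
  rcases lt_or_gt_of_ne hxy with h | h
  · apply mul_pos_of_neg_of_neg
    · simp only [sub_neg]; exact Real.exp_lt_exp.2 (by nlinarith)
    · linarith
  · apply mul_pos
    · simp only [sub_pos]; exact Real.exp_lt_exp.2 (by nlinarith)
    · linarith

/-- **Advantage-guided sampling beats uniform sampling** (Section 4, point 3):
the expected advantage under the Boltzmann (softmax) distribution with inverse
temperature `β ≥ 0` is at least the uniform-sampling average, and strictly
greater when `β > 0` and the advantage function is not constant. -/
theorem softmax_expected_advantage_ge_uniform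
    {𝒜 : Type*} [Fintype 𝒜] [Nonempty 𝒜] (A : 𝒜 → ℝ)
    (β : ℝ) (hβ : 0 ≤ β) :
    ((1 : ℝ) / (Fintype.card 𝒜 : ℝ)) * ∑ a : 𝒜, A a ≤
        (∑ a : 𝒜, Real.exp (β * A a) * A a) / ∑ a : 𝒜, Real.exp (β * A a) ∧
      (0 < β → (∃ a b : 𝒜, A a ≠ A b) →
        ((1 : ℝ) / (Fintype.card 𝒜 : ℝ)) * ∑ a : 𝒜, A a <
          (∑ a : 𝒜, Real.exp (β * A a) * A a) / ∑ a : 𝒜, Real.exp (β * A a)) := by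
  set f : 𝒜 → ℝ := fun a => Real.exp (β * A a) with hf
  have hn : (0 : ℝ) < (Fintype.card 𝒜 : ℝ) := by
    exact_mod_cast Fintype.card_pos
  have hS : (0 : ℝ) < ∑ a : 𝒜, f a :=
    Finset.sum_pos (fun a _ => Real.exp_pos _) Finset.univ_nonempty
  have key : ∀ (h : 0 ≤ ∑ a : 𝒜, ∑ b : 𝒜, (f a - f b) * (A a - A b)),
      ((1 : ℝ) / (Fintype.card 𝒜 : ℝ)) * ∑ a : 𝒜, A a ≤
        (∑ a : 𝒜, f a * A a) / ∑ a : 𝒜, f a := by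
    intro h
    rw [expand_pairs] at h
    rw [div_mul_eq_mul_div, div_le_div_iff₀ hn hS]
    nlinarith
  constructor
  · exact key (Finset.sum_nonneg fun a _ => Finset.sum_nonneg fun b _ => term_nonneg β _ _ hβ)
  · rintro hβ' ⟨a₀, b₀, hab⟩
    have h : 0 < ∑ a : 𝒜, ∑ b : 𝒜, (f a - f b) * (A a - A b) := by
      apply Finset.sum_pos' (fun a _ => Finset.sum_nonneg fun b _ => term_nonneg β _ _ hβ)
      refine ⟨a₀, Finset.mem_univ _, ?_⟩
      apply Finset.sum_pos' (fun b _ => term_nonneg β _ _ hβ)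
      exact ⟨b₀, Finset.mem_univ _, term_pos β _ _ hβ' hab⟩
    rw [expand_pairs] at h
    rw [div_mul_eq_mul_div, div_lt_div_iff₀ hn hS]
    nlinarith
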